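/- arXiv:1107.0386 — 3 statements merged into one kernel-verified Lean document; each statement's English description precedes it below -/
import Mathlib

section
/- Suppose E₀ : [−d, d] → ℝ is a continuous function with E₀(a) − E₀(c) ≥ (1/C₂)·|a − c| for the endpoint c ∈ {−d, d} closest to a, where C₂ > 0. Fix δ ∈ (0, 2d·√1) with δ < d. If H(a) and H(c) are self-adjoint operators bounded below with min spectrum E₀(a), E₀(c) respectively, satisfying ‖H(a) − H(c)‖ ≤ 2M (as bounded perturbation), and if E₀(a) − E* ≥ δ/C₂ where E* = min over all positions, then H(a) − E* ≥ (1/C_δ)·(H(c) − E* + |a−c|) in quadratic form sense, where C_δ = min(1/(C+1), δ/(2(C+1)C₂·d))⁻¹ with C = 1 + 2C₂M/δ. -/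
/-!
Write `q_a(x) = ⟪x, H(a) x⟫ − E*‖x‖²` and likewise `q_c`. Far from the corners `q_a` has the
spectral gap `q_a(x) ≥ (δ/C₂)‖x‖²`, so the bounded perturbation `2M‖x‖²` separating `q_c` from
`q_a` and the term `|a − c|‖x‖² ≤ 2d‖x‖²` are both controlled by multiples of `q_a`, namely
`q_c ≤ C q_a` and `|a − c|‖x‖² ≤ (2dC₂/δ) q_a`; the constant `C_δ` is chosen to absorb both.
-/

open scoped RealInnerProductSpace

lemma min_inv_mul_add_le_of_le_mul {C D u v q : ℝ} (hC : 0 ≤ C) (hD : 0 < D)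
    (hu : 0 ≤ u) (hv : 0 ≤ v) (huq : u ≤ C * q) (hvq : v ≤ D * q) :
    min (1 / (C + 1)) (1 / ((C + 1) * D)) * (u + v) ≤ q :=
  calc min (1 / (C + 1)) (1 / ((C + 1) * D)) * (u + v)
      ≤ 1 / (C + 1) * (C * q) + 1 / ((C + 1) * D) * (D * q) := by
        rw [mul_add]
        gcongr
        exacts [min_le_left _ _, min_le_right _ _]
    _ = q := by field_simp

lemma mul_le_div_mul_of_mul_le {ε b n q : ℝ} (hε : 0 < ε) (hb : 0 ≤ b) (h : ε * n ≤ q) :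
    b * n ≤ b / ε * q :=
  calc b * n = b / ε * (ε * n) := by field_simp
    _ ≤ b / ε * q := by gcongr

lemma le_one_add_div_mul_of_le_add_mul {ε b n p q : ℝ} (hε : 0 < ε) (hb : 0 ≤ b)
    (hgap : ε * n ≤ q) (hp : p ≤ q + b * n) : p ≤ (1 + b / ε) * q := by
  linarith [mul_le_div_mul_of_mul_le hε hb hgap]

lemma abs_sub_le_two_mul_of_mem_Icc {a c d : ℝ} (ha : a ∈ Set.Icc (-d) d)
    (hc : c ∈ Set.Icc (-d) d) : |a - c| ≤ 2 * d := by
  simpa [← Real.dist_eq, two_mul] using Real.dist_le_of_mem_Icc ha hc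

namespace ContinuousLinearMap

variable {H : Type*} [NormedAddCommGroup H] [InnerProductSpace ℝ H]

lemma inner_apply_self_le_add_opNorm_mul (S T : H →L[ℝ] H) (x : H) :
    ⟪x, S x⟫ ≤ ⟪x, T x⟫ + ‖T - S‖ * ‖x‖ ^ 2 := by
  have hdiff : ⟪x, T x⟫ - ⟪x, S x⟫ = ⟪x, (T - S) x⟫ := by
    rw [sub_apply, inner_sub_right]
  have hbound : |⟪x, (T - S) x⟫| ≤ ‖T - S‖ * ‖x‖ ^ 2 :=
    calc |⟪x, (T - S) x⟫| ≤ ‖x‖ * ‖(T - S) x‖ := abs_real_inner_le_norm _ _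
      _ ≤ ‖x‖ * (‖T - S‖ * ‖x‖) := by gcongr; exact (T - S).le_opNorm x
      _ = ‖T - S‖ * ‖x‖ ^ 2 := by ring
  linarith [neg_abs_le ⟪x, (T - S) x⟫]

lemma mul_sq_norm_le_inner_apply_self_sub {T : H →L[ℝ] H} {E₀ E e : ℝ}
    (hT : ∀ x : H, E₀ * ‖x‖ ^ 2 ≤ ⟪x, T x⟫) (he : e ≤ E₀ - E) (x : H) :
    e * ‖x‖ ^ 2 ≤ ⟪x, T x⟫ - E * ‖x‖ ^ 2 := by
  nlinarith [hT x, mul_le_mul_of_nonneg_right he (sq_nonneg ‖x‖)]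

end ContinuousLinearMap

theorem stmt2_general {H : Type*} [NormedAddCommGroup H] [InnerProductSpace ℝ H]
    (dmax C₂ δ M Estar : ℝ) (hdmax : 0 < dmax) (hC₂ : 0 < C₂) (hδ : 0 < δ)
    (a c : ℝ) (ha : a ∈ Set.Icc (-dmax) dmax) (hcorner : c = -dmax ∨ c = dmax)
    (Ha Hc : H →L[ℝ] H) (E₀a E₀c : ℝ)
    (hHa_lb : ∀ x : H, E₀a * ‖x‖ ^ 2 ≤ ⟪x, Ha x⟫)
    (hHc_lb : ∀ x : H, E₀c * ‖x‖ ^ 2 ≤ ⟪x, Hc x⟫)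
    (hpert : ‖Ha - Hc‖ ≤ 2 * M)
    (hEstarc : Estar ≤ E₀c)
    (hfar : δ / C₂ ≤ E₀a - Estar) :
    ∀ x : H,
      min (1 / ((1 + 2 * C₂ * M / δ) + 1))
          (δ / (2 * ((1 + 2 * C₂ * M / δ) + 1) * C₂ * dmax)) *
        (⟪x, Hc x⟫ - Estar * ‖x‖ ^ 2 + |a - c| * ‖x‖ ^ 2)
      ≤ ⟪x, Ha x⟫ - Estar * ‖x‖ ^ 2 := by
  intro x
  have hε : 0 < δ / C₂ := div_pos hδ hC₂
  have hM : 0 ≤ M := by linarith [norm_nonneg (Ha - Hc)]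
  have hn : 0 ≤ ‖x‖ ^ 2 := by positivity
  have hgap := ContinuousLinearMap.mul_sq_norm_le_inner_apply_self_sub hHa_lb hfar x
  have hqc : 0 ≤ ⟪x, Hc x⟫ - Estar * ‖x‖ ^ 2 := by
    simpa using ContinuousLinearMap.mul_sq_norm_le_inner_apply_self_sub hHc_lb
      (sub_nonneg.2 hEstarc) x
  have hcomp : ⟪x, Hc x⟫ - Estar * ‖x‖ ^ 2 ≤
      (1 + 2 * C₂ * M / δ) * (⟪x, Ha x⟫ - Estar * ‖x‖ ^ 2) := by
    have h := le_one_add_div_mul_of_le_add_mul (p := ⟪x, Hc x⟫ - Estar * ‖x‖ ^ 2) hε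
      (by positivity : 0 ≤ 2 * M) hgap
      (by linarith [Hc.inner_apply_self_le_add_opNorm_mul Ha x,
        mul_le_mul_of_nonneg_right hpert hn])
    rwa [div_div_eq_mul_div, mul_right_comm] at h
  have hc : c ∈ Set.Icc (-dmax) dmax := by
    rcases hcorner with rfl | rfl <;> constructor <;> linarith
  have hdist : |a - c| * ‖x‖ ^ 2 ≤ 2 * dmax / (δ / C₂) * (⟪x, Ha x⟫ - Estar * ‖x‖ ^ 2) :=
    (mul_le_mul_of_nonneg_right (abs_sub_le_two_mul_of_mem_Icc ha hc) hn).trans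
      (mul_le_div_mul_of_mul_le hε (by positivity) hgap)
  have hD : 1 / ((1 + 2 * C₂ * M / δ + 1) * (2 * dmax / (δ / C₂)))
      = δ / (2 * (1 + 2 * C₂ * M / δ + 1) * C₂ * dmax) := by
    field_simp
  simpa only [hD] using min_inv_mul_add_le_of_le_mul (by positivity) (by positivity) hqc
    (mul_nonneg (abs_nonneg _) hn) hcomp hdist

/-- "Far from the corners" comparison: if `E₀(a) − E* ≥ δ/C₂`, then
`H(a) − E* ≥ (1/C_δ)(H(c) − E* + |a−c|)` with `C_δ⁻¹ = min(1/(C+1), δ/(2(C+1)C₂ d))`,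
`C = 1 + 2C₂M/δ`. -/
theorem stmt2 {H : Type*} [NormedAddCommGroup H] [InnerProductSpace ℝ H]
    (dmax C₂ δ M Estar : ℝ) (hdmax : 0 < dmax) (hC₂ : 0 < C₂) (hδ : 0 < δ)
    (hδd : δ < dmax) (hM : 0 < M)
    (a c : ℝ) (ha : a ∈ Set.Icc (-dmax) dmax) (hcorner : c = -dmax ∨ c = dmax)
    (hclosest : |a - c| = min |a - dmax| |a + dmax|)
    (Ha Hc : H →L[ℝ] H) (E₀a E₀c : ℝ)
    (hHa_lb : ∀ x : H, E₀a * ‖x‖ ^ 2 ≤ ⟪x, Ha x⟫)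
    (hHc_lb : ∀ x : H, E₀c * ‖x‖ ^ 2 ≤ ⟪x, Hc x⟫)
    (hpert : ‖Ha - Hc‖ ≤ 2 * M)
    (hlin : (1 / C₂) * |a - c| ≤ E₀a - E₀c)
    (hEstarc : Estar ≤ E₀c) (hEstara : Estar ≤ E₀a)
    (hfar : δ / C₂ ≤ E₀a - Estar) :
    ∀ x : H,
      min (1 / ((1 + 2 * C₂ * M / δ) + 1))
          (δ / (2 * ((1 + 2 * C₂ * M / δ) + 1) * C₂ * dmax)) *
        (⟪x, Hc x⟫ - Estar * ‖x‖ ^ 2 + |a - c| * ‖x‖ ^ 2)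
      ≤ ⟪x, Ha x⟫ - Estar * ‖x‖ ^ 2 :=
  stmt2_general dmax C₂ δ M Estar hdmax hC₂ hδ a c ha hcorner Ha Hc E₀a E₀c hHa_lb hHc_lb hpert
    hEstarc hfar
end

section
/- Let E : [−d, d]ᵈ → ℝ be C¹, reflection-symmetric in each coordinate, and suppose ∂_j E(a) < 0 whenever a_j > 0, for each j. Then there exists C₂ > 0 such that E(a) − min E ≥ (1/C₂)·D(a) for all a, where D(a) is the Euclidean distance from a to the set of corners {(±d,…,±d)}. -/
/-!
By reflection symmetry `E a = E |a|`, so it suffices to work on `[0, d]ⁿ`, where raising a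
coordinate to `d` never increases `E`. Since `∇E` is continuous on the compact cube, the partial
derivative `∂ⱼE` is at most `-κ < 0` wherever `aⱼ ≥ d / 2`; hence raising `aⱼ ≥ 0` to `d`
lowers `E` by at least `κ / 2 · (d - aⱼ)`. Summing over the coordinates gives
`E a - E (d, …, d) ≥ κ / 2 · ∑ (d - |aᵢ|)`, and this sum dominates the Euclidean distance from `a`
to the corner with the signs of `a`.
-/

open Function Set Filter Topology

section Coordinatewise

variable {ι α : Type*} [Fintype ι] [DecidableEq ι]

theorem apply_piMap_eq_of_update {β : Type*} {f : (ι → α) → β} {g : ι → α → α}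
    (h : ∀ a j, f (update a j (g j (a j))) = f a) (a : ι → α) : f (Pi.map g a) = f a := by
  suffices ∀ S : Finset ι, f (S.piecewise (Pi.map g a) a) = f a by simpa using this Finset.univ
  intro S
  induction S using Finset.induction_on with
  | empty => simp
  | insert j S hj ih =>
    rw [Finset.piecewise_insert, Pi.map_apply, ← S.piecewise_eq_of_notMem (Pi.map g a) a hj, h, ih]

theorem sum_le_sub_of_update_le {f : (ι → α) → ℝ} {T : Set α} {c : ι → α} (hc : ∀ i, c i ∈ T)
    {φ : ι → α → ℝ} (h : ∀ x : ι → α, (∀ i, x i ∈ T) → ∀ j, φ j (x j) ≤ f x - f (update x j (c j)))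
    {x : ι → α} (hx : ∀ i, x i ∈ T) : ∑ j, φ j (x j) ≤ f x - f c := by
  suffices ∀ S : Finset ι, ∑ j ∈ S, φ j (x j) ≤ f x - f (S.piecewise c x) by
    simpa using this Finset.univ
  intro S
  induction S using Finset.induction_on with
  | empty => simp
  | insert j S hj ih =>
    have hstep := h _ (fun i => S.piecewise_cases c x (· ∈ T) (hc i) (hx i)) j
    rw [S.piecewise_eq_of_notMem c x hj] at hstep
    rw [Finset.sum_insert hj, Finset.piecewise_insert]
    linarith

end Coordinatewise

theorem abs_update_le {ι : Type*} [DecidableEq ι] {d : ℝ} {x : ι → ℝ} (hx : ∀ i, |x i| ≤ d)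
    {j : ι} {u : ℝ} (hu : |u| ≤ d) (i : ι) : |update x j u i| ≤ d := by
  rcases eq_or_ne i j with rfl | hij
  · simpa using hu
  · simpa [update_of_ne hij] using hx i

theorem sInf_dist_corner_le_sum {ι : Type*} [Fintype ι] {d : ℝ} (a : ι → ℝ)
    (ha : ∀ i, |a i| ≤ d) :
    sInf {r : ℝ | ∃ c : ι → ℝ, (∀ i, c i = d ∨ c i = -d) ∧ r = Real.sqrt (∑ i, (a i - c i) ^ 2)}
      ≤ ∑ i, (d - |a i|) := by
  set c : ι → ℝ := fun i => if 0 ≤ a i then d else -d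
  have hc i : (a i - c i) ^ 2 = (d - |a i|) ^ 2 := by
    by_cases h : 0 ≤ a i
    · simp only [c, if_pos h, abs_of_nonneg h]; ring
    · simp only [c, if_neg h, abs_of_neg (not_le.1 h)]; ring
  refine le_trans (b := Real.sqrt (∑ i, (a i - c i) ^ 2)) (csInf_le ?_ ?_) ?_
  · exact ⟨0, by rintro r ⟨_, _, rfl⟩; exact Real.sqrt_nonneg _⟩
  · exact ⟨c, fun i => by by_cases h : 0 ≤ a i <;> simp [c, h], rfl⟩
  have hnonneg i : 0 ≤ d - |a i| := sub_nonneg.2 (ha i)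
  rw [Real.sqrt_le_iff, Finset.sum_congr rfl fun i _ => hc i]
  exact ⟨Finset.sum_nonneg fun i _ => hnonneg i,
    Finset.sum_sq_le_sq_sum_of_nonneg fun i _ => hnonneg i⟩

section Cube

variable {ι : Type*} [Fintype ι] [DecidableEq ι] {E : (ι → ℝ) → ℝ} {d : ℝ}

theorem hasDerivAt_comp_update (hE : Differentiable ℝ E) (x : ι → ℝ) (j : ι) (t : ℝ) :
    HasDerivAt (fun s => E (update x j s)) (fderiv ℝ E (update x j t) (Pi.single j 1)) t :=
  (hE _).hasFDerivAt.comp_hasDerivAt t (hasDerivAt_update x j t)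

theorem mul_sub_le_sub_of_fderiv_single_le (hE : Differentiable ℝ E) {x : ι → ℝ} {j : ι}
    {κ s t : ℝ} (hst : s ≤ t) (h : ∀ u ∈ Ioo s t, fderiv ℝ E (update x j u) (Pi.single j 1) ≤ -κ) :
    κ * (t - s) ≤ E (update x j s) - E (update x j t) := by
  have hderiv := hasDerivAt_comp_update hE x j
  have hmvt := (convex_Icc s t).image_sub_le_mul_sub_of_deriv_le
    (fun u _ => (hderiv u).continuousAt.continuousWithinAt)
    (fun u _ => (hderiv u).differentiableAt.differentiableWithinAt)
    (fun u hu => by rw [(hderiv u).deriv]; rw [interior_Icc] at hu; exact h u hu)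
    s (left_mem_Icc.2 hst) t (right_mem_Icc.2 hst) hst
  linarith

theorem exists_pos_fderiv_single_le_neg (hd : 0 < d) (hE : ContDiff ℝ 1 E)
    (hderiv : ∀ (a : ι → ℝ) (j : ι), (∀ i, |a i| ≤ d) → 0 < a j →
      fderiv ℝ E a (Pi.single j 1) < 0) :
    ∃ κ > 0, ∀ (a : ι → ℝ) (j : ι), (∀ i, |a i| ≤ d) → d / 2 ≤ a j →
      fderiv ℝ E a (Pi.single j 1) ≤ -κ := by
  have hcube : IsCompact {a : ι → ℝ | ∀ i, |a i| ≤ d} := by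
    have : {a : ι → ℝ | ∀ i, |a i| ≤ d} = Metric.closedBall 0 d := by
      ext a
      simp only [mem_ofPred_eq, mem_closedBall_zero_iff, pi_norm_le_iff_of_nonneg hd.le,
        Real.norm_eq_abs]
    exact this ▸ isCompact_closedBall 0 d
  have hcoord (j : ι) : ∀ᶠ κ in 𝓝[>] 0, ∀ a ∈ {a : ι → ℝ | ∀ i, |a i| ≤ d} ∩ {a | d / 2 ≤ a j},
      κ ≤ -fderiv ℝ E a (Pi.single j 1) := by
    obtain ⟨κ, hκ, hbound⟩ :=
      (hcube.inter_right (isClosed_le continuous_const (continuous_apply j) :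
        IsClosed {a : ι → ℝ | d / 2 ≤ a j})).exists_forall_le'
        (((hE.continuous_fderiv one_ne_zero).clm_apply continuous_const).neg.continuousOn)
        (fun a ha => neg_pos.2 (hderiv a j ha.1 (by linarith [show d / 2 ≤ a j from ha.2])))
    filter_upwards [Ioc_mem_nhdsGT hκ] with κ' hκ' a ha using hκ'.2.trans (hbound a ha)
  obtain ⟨κ, hbound, hκ⟩ := ((eventually_all.2 hcoord).and self_mem_nhdsWithin).exists
  exact ⟨κ, hκ, fun a j ha hj => le_neg.1 (hbound j a ⟨ha, hj⟩)⟩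

theorem half_mul_sub_le_sub_update (hE : Differentiable ℝ E)
    (hderiv : ∀ (a : ι → ℝ) (j : ι), (∀ i, |a i| ≤ d) → 0 < a j →
      fderiv ℝ E a (Pi.single j 1) < 0)
    {κ : ℝ} (hκ : 0 ≤ κ) (hbound : ∀ (a : ι → ℝ) (j : ι), (∀ i, |a i| ≤ d) → d / 2 ≤ a j →
      fderiv ℝ E a (Pi.single j 1) ≤ -κ)
    {x : ι → ℝ} (hx : ∀ i, |x i| ≤ d) {j : ι} (hxj : 0 ≤ x j) :
    κ / 2 * (d - x j) ≤ E x - E (update x j d) := by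
  -- Below `d / 2` only the sign of `∂ⱼE` is known, so split the segment at `m`.
  set m := max (x j) (d / 2)
  have hxd : x j ≤ d := (le_abs_self _).trans (hx j)
  have hmd : m ≤ d := max_le hxd (by linarith)
  have hmem {u : ℝ} (hu : u ∈ Ioo (x j) d) : ∀ i, |update x j u i| ≤ d :=
    abs_update_le hx (abs_le.2 ⟨by linarith [hu.1], hu.2.le⟩)
  have hflat : 0 * (m - x j) ≤ E (update x j (x j)) - E (update x j m) :=
    mul_sub_le_sub_of_fderiv_single_le hE (le_max_left _ _) fun u hu =>
      (hderiv _ j (hmem ⟨hu.1, hu.2.trans_le hmd⟩)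
        (by simpa using hxj.trans_lt hu.1)).le.trans_eq neg_zero.symm
  have hsteep : κ * (d - m) ≤ E (update x j m) - E (update x j d) :=
    mul_sub_le_sub_of_fderiv_single_le hE hmd fun u hu =>
      hbound _ j (hmem ⟨(le_max_left _ _).trans_lt hu.1, hu.2⟩)
        (by simpa using ((le_max_right _ _).trans_lt hu.1).le)
  have hm : m ≤ (d + x j) / 2 := max_le (by linarith) (by linarith)
  have hhalf : κ * ((d - x j) / 2) ≤ κ * (d - m) := mul_le_mul_of_nonneg_left (by linarith) hκ
  rw [update_eq_self] at hflat
  linarith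

theorem half_mul_sum_le_sub_corner (hE : Differentiable ℝ E)
    (hsym : ∀ (a : ι → ℝ) (j : ι), E (update a j (-(a j))) = E a)
    (hderiv : ∀ (a : ι → ℝ) (j : ι), (∀ i, |a i| ≤ d) → 0 < a j →
      fderiv ℝ E a (Pi.single j 1) < 0)
    {κ : ℝ} (hκ : 0 ≤ κ) (hbound : ∀ (a : ι → ℝ) (j : ι), (∀ i, |a i| ≤ d) → d / 2 ≤ a j →
      fderiv ℝ E a (Pi.single j 1) ≤ -κ)
    {a : ι → ℝ} (ha : ∀ i, |a i| ≤ d) :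
    κ / 2 * ∑ i, (d - |a i|) ≤ E a - E (fun _ => d) := by
  have habs : E (Pi.map (fun _ => abs) a) = E a := by
    refine apply_piMap_eq_of_update (fun b j => ?_) a
    rcases abs_choice (b j) with h | h <;> rw [h]
    exacts [congrArg E (update_eq_self j b), hsym b j]
  rw [← habs, Finset.mul_sum]
  refine sum_le_sub_of_update_le (T := Icc 0 d) (φ := fun _ t => κ / 2 * (d - t))
    (fun i => right_mem_Icc.2 ((abs_nonneg _).trans (ha i))) (fun x hx j => ?_) (fun i => ⟨abs_nonneg _, ha i⟩)
  exact half_mul_sub_le_sub_update hE hderiv hκ hbound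
    (fun i => abs_le.2 ⟨by linarith [(hx i).1, (hx i).2], (hx i).2⟩) (hx j).1

end Cube

/-- Multidimensional linear growth bound (6.2): if `E` is `C¹`, reflection-symmetric in
each coordinate, with `∂_j E(a) < 0` whenever `a_j > 0` on the cube, then
`E(a) − min E ≥ (1/C₂) D(a)` where `D(a)` is the Euclidean distance to the corners. -/
theorem stmt8 {n : ℕ} (d : ℝ) (hd : 0 < d) (E : (Fin n → ℝ) → ℝ)
    (hE : ContDiff ℝ 1 E)
    (hsym : ∀ (a : Fin n → ℝ) (j : Fin n), E (Function.update a j (-(a j))) = E a)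
    (hderiv : ∀ (a : Fin n → ℝ) (j : Fin n), (∀ i, |a i| ≤ d) → 0 < a j →
      fderiv ℝ E a (Pi.single j 1) < 0) :
    ∃ C₂ > (0 : ℝ), ∀ a : Fin n → ℝ, (∀ i, |a i| ≤ d) →
      (1 / C₂) * sInf {r : ℝ | ∃ c : Fin n → ℝ, (∀ i, c i = d ∨ c i = -d) ∧
          r = Real.sqrt (∑ i, (a i - c i) ^ 2)}
        ≤ E a - sInf (E '' {a : Fin n → ℝ | ∀ i, |a i| ≤ d}) := by
  obtain ⟨κ, hκ, hbound⟩ := exists_pos_fderiv_single_le_neg hd hE hderiv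
  have hgrowth {a : Fin n → ℝ} (ha : ∀ i, |a i| ≤ d) :=
    half_mul_sum_le_sub_corner (hE.differentiable one_ne_zero) hsym hderiv hκ.le hbound ha
  have hsum_nonneg {a : Fin n → ℝ} (ha : ∀ i, |a i| ≤ d) : 0 ≤ κ / 2 * ∑ i, (d - |a i|) :=
    mul_nonneg (by positivity) (Finset.sum_nonneg fun i _ => sub_nonneg.2 (ha i))
  have hmin : sInf (E '' {a : Fin n → ℝ | ∀ i, |a i| ≤ d}) ≤ E (fun _ => d) :=
    csInf_le ⟨E (fun _ => d), forall_mem_image.2 fun a ha =>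
        sub_nonneg.1 ((hsum_nonneg ha).trans (hgrowth ha))⟩
      (mem_image_of_mem E fun _ => (abs_of_pos hd).le)
  refine ⟨2 / κ, by positivity, fun a ha => ?_⟩
  calc 1 / (2 / κ) * sInf _ ≤ κ / 2 * ∑ i, (d - |a i|) := by
        rw [one_div_div]
        exact mul_le_mul_of_nonneg_left (sInf_dist_corner_le_sum a ha) (by positivity)
    _ ≤ E a - E (fun _ => d) := hgrowth ha
    _ ≤ _ := by linarith
end

section
/- Let Λ = (−1/2, 1/2) and let φ₀ ∈ H¹(Λ) be positive with φ₀(−1/2) = h ≠ k = φ₀(1/2). For an L-periodic sequence (ω_n) with each ω_n ∈ {+1, −1}, define a continuous function ψ on ℝ by pasting on each interval (n−1/2, n+1/2) the function c_n·φ₀(ε_n(x−n)) where ε_n = ω_n and the constants c_n > 0 are chosen for continuity at half-integers. Then ψ can be extended to an L-periodic continuous function on ℝ if and only if L is even and #{n in a period : ω_n = +1} = #{n in a period : ω_n = −1}. -/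
/-!
Let `t = φ₀ (1/2) / φ₀ (-1/2)`, so `t ≠ 1`. On cell `n` the block takes at its right end `t ^ ω n`
times its value at its left end. Continuity therefore forces the left-end values
`d n = ψ (n - 1/2)` to satisfy `d (n + 1) = d n * t ^ ω n`, and `L`-periodicity forces
`t ^ (∑_{i<L} ω i) = 1`, i.e. `∑_{i<L} ω i = 0`; for `±1`-valued `ω` this says that `+1` and `-1`
occur equally often, so `L` is even. Conversely, when this sum vanishes, `d n = t ^ (∑_{0≤i<n} ω i)`
is `L`-periodic and determines periodic constants `c n`.
-/

open Finset Function Set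

namespace PeriodicPasting

def cell (n : ℤ) : Set ℝ := Icc ((n : ℝ) - 1 / 2) (n + 1 / 2)

theorem continuous_of_continuousOn_cell {X : Type*} [TopologicalSpace X] {f : ℝ → X}
    (hf : ∀ n, ContinuousOn f (cell n)) : Continuous f := by
  refine continuous_iff_continuousAt.2 fun x => ?_
  set n := ⌊x⌋
  have hcover : Icc ((n : ℝ) - 1 / 2) (n + 3 / 2) ⊆ cell n ∪ cell (n + 1) := by
    intro y hy
    by_cases hyn : y ≤ n + 1 / 2
    · exact Or.inl ⟨hy.1, hyn⟩
    · refine Or.inr ⟨?_, ?_⟩ <;> push_cast <;> linarith [hy.2]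
  have hnhds : Icc ((n : ℝ) - 1 / 2) (n + 3 / 2) ∈ nhds x :=
    Icc_mem_nhds (by linarith [Int.floor_le x]) (by linarith [Int.lt_floor_add_one x])
  exact (((hf n).union_of_isClosed (hf (n + 1)) isClosed_Icc isClosed_Icc).mono
    hcover).continuousAt hnhds

section Paste

variable {X : Type*} {F : ℤ → ℝ → X}

/-- Uses `F n` on `[n - 1/2, n + 1/2)`; `round` sends half-integers up. -/
noncomputable def paste (F : ℤ → ℝ → X) (x : ℝ) : X := F (round x) x

theorem paste_eqOn_cell (hglue : ∀ n : ℤ, F n (n + 1 / 2) = F (n + 1) (n + 1 / 2)) (n : ℤ) :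
    EqOn (paste F) (F n) (cell n) := by
  rintro x ⟨hl, hr⟩
  rcases hr.lt_or_eq with hr | rfl
  · rw [paste, round_eq_iff.2 ⟨hl, hr⟩]
  · have hround : round ((n : ℝ) + 1 / 2) = n + 1 :=
      round_eq_iff.2 ⟨by push_cast; linarith, by push_cast; linarith⟩
    rw [paste, hround, hglue]

theorem paste_periodic {L : ℤ} (hF : ∀ n x, F (n + L) (x + L) = F n x) :
    Periodic (paste F) L := fun x => by
  rw [paste, paste, round_add_intCast, hF]

theorem continuous_paste [TopologicalSpace X] (hF : ∀ n, ContinuousOn (F n) (cell n))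
    (hglue : ∀ n : ℤ, F n (n + 1 / 2) = F (n + 1) (n + 1 / 2)) : Continuous (paste F) :=
  continuous_of_continuousOn_cell fun n => (hF n).congr (paste_eqOn_cell hglue n)

end Paste

theorem eqOn_Icc_of_eqOn_Ioo {Y : Type*} [TopologicalSpace Y] [T2Space Y] {f g : ℝ → Y}
    {a b : ℝ} (hab : a < b) (hf : ContinuousOn f (Icc a b)) (hg : ContinuousOn g (Icc a b))
    (h : EqOn f g (Ioo a b)) : EqOn f g (Icc a b) :=
  h.of_subset_closure hf hg Ioo_subset_Icc_self (closure_Ioo hab.ne).ge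

section Counting

variable {ι : Type*} (s : Finset ι) {f : ι → ℤ}

theorem sum_eq_card_filter_sub_card_filter (hf : ∀ i ∈ s, f i = 1 ∨ f i = -1) :
    ∑ i ∈ s, f i = #{i ∈ s | f i = 1} - #{i ∈ s | f i = -1} := by
  have hne : {i ∈ s | ¬f i = 1} = {i ∈ s | f i = -1} :=
    filter_congr fun i hi => by rcases hf i hi with h | h <;> simp [h]
  rw [← sum_filter_add_sum_filter_not s (fun i => f i = 1), hne,
    sum_congr rfl fun i hi => (mem_filter.1 hi).2, sum_congr rfl fun i hi => (mem_filter.1 hi).2]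
  simp [sub_eq_add_neg]

theorem card_filter_add_card_filter (hf : ∀ i ∈ s, f i = 1 ∨ f i = -1) :
    #{i ∈ s | f i = 1} + #{i ∈ s | f i = -1} = #s := by
  have hne : {i ∈ s | ¬f i = 1} = {i ∈ s | f i = -1} :=
    filter_congr fun i hi => by rcases hf i hi with h | h <;> simp [h]
  rw [← hne, card_filter_add_card_filter_not]

theorem even_and_card_filter_eq_iff_sum_eq_zero (hf : ∀ i ∈ s, f i = 1 ∨ f i = -1) :
    (Even #s ∧ #{i ∈ s | f i = 1} = #{i ∈ s | f i = -1}) ↔ ∑ i ∈ s, f i = 0 := by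
  have hsum := sum_eq_card_filter_sub_card_filter s hf
  have hcard := card_filter_add_card_filter s hf
  constructor
  · rintro ⟨-, heq⟩
    omega
  · intro h
    have heq : #{i ∈ s | f i = 1} = #{i ∈ s | f i = -1} := by omega
    exact ⟨⟨#{i ∈ s | f i = 1}, by omega⟩, heq⟩

end Counting

section PartialSum

variable {G : Type*} [AddCommGroup G] (ω : ℤ → G)

/-- The discrete antiderivative of `ω` vanishing at `0`; one of the two sums is always empty. -/
noncomputable def partialSum (n : ℤ) : G :=
  ∑ i ∈ Ico 0 n, ω i - ∑ i ∈ Ico n 0, ω i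

@[simp]
theorem partialSum_zero : partialSum ω 0 = 0 := by
  simp [partialSum]

theorem partialSum_add_one (n : ℤ) : partialSum ω (n + 1) = partialSum ω n + ω n := by
  rcases le_or_gt 0 n with hn | hn
  · rw [partialSum, partialSum, Finset.Ico_eq_empty_of_le hn,
      Finset.Ico_eq_empty_of_le (by omega : (0 : ℤ) ≤ n + 1),
      ← Finset.insert_Ico_right_eq_Ico_add_one hn, sum_insert (by simp)]
    simp only [sum_empty, sub_zero]
    abel
  · rw [partialSum, partialSum, Finset.Ico_eq_empty_of_le hn.le,
      Finset.Ico_eq_empty_of_le (by omega : n + 1 ≤ 0),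
      ← Finset.insert_Ico_add_one_left_eq_Ico hn, sum_insert (by simp)]
    simp only [sum_empty, zero_sub]
    abel

theorem partialSum_natCast (m : ℕ) : partialSum ω m = ∑ i ∈ range m, ω i := by
  induction m with
  | zero => simp
  | succ m ih => rw [Nat.cast_succ, partialSum_add_one, ih, sum_range_succ]

theorem partialSum_add_natCast {L : ℕ} (hper : Periodic ω L) (n : ℤ) :
    partialSum ω (n + L) = partialSum ω n + ∑ i ∈ range L, ω i := by
  set D : ℤ → G := fun n => partialSum ω (n + L) - partialSum ω n
  have hD : Periodic D 1 := fun n => by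
    simp only [D, add_right_comm n 1, partialSum_add_one, hper n]
    abel
  have := hD.int_mul_eq n
  simp only [D, Int.cast_id, mul_one, zero_add, partialSum_zero, sub_zero,
    partialSum_natCast] at this
  rw [← this]
  abel

end PartialSum

theorem eq_mul_zpow_sum_range {M : Type*} [GroupWithZero M] {d : ℤ → M} {t : M} {ω : ℤ → ℤ}
    (ht : t ≠ 0) (h : ∀ n, d (n + 1) = d n * t ^ ω n) (m : ℕ) :
    d m = d 0 * t ^ ∑ i ∈ range m, ω i := by
  induction m with
  | zero => simp
  | succ m ih => rw [Nat.cast_succ, h, ih, sum_range_succ, zpow_add₀ ht, mul_assoc]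

theorem sign_mul_mem_Icc {ε : ℤ} (hε : ε = 1 ∨ ε = -1) {y : ℝ}
    (hy : y ∈ Icc (-(1 / 2 : ℝ)) (1 / 2)) : (ε : ℝ) * y ∈ Icc (-(1 / 2 : ℝ)) (1 / 2) := by
  rcases hε with rfl | rfl
  · simpa using hy
  · exact ⟨by push_cast; linarith [hy.2], by push_cast; linarith [hy.1]⟩

theorem apply_sign_mul_half (g : ℝ → ℝ) (h0 : g (-(1 / 2)) ≠ 0) (h1 : g (1 / 2) ≠ 0) {ε : ℤ}
    (hε : ε = 1 ∨ ε = -1) :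
    g (ε * (1 / 2)) = g (ε * (-(1 / 2))) * (g (1 / 2) / g (-(1 / 2))) ^ ε := by
  rcases hε with rfl | rfl
  · simp only [Int.cast_one, one_mul, zpow_one]
    rw [mul_div_cancel₀ _ h0]
  · simp only [Int.cast_neg, Int.cast_one, neg_one_mul, neg_neg, zpow_neg_one, inv_div]
    rw [mul_div_cancel₀ _ h1]

section Block

variable (φ₀ : ℝ → ℝ) (ω : ℤ → ℤ) (c : ℤ → ℝ)

def block (n : ℤ) (x : ℝ) : ℝ := c n * φ₀ (ω n * (x - n))

theorem block_intCast_add (n : ℤ) (s : ℝ) : block φ₀ ω c n (n + s) = c n * φ₀ (ω n * s) := by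
  simp [block]

theorem block_add_period {L : ℤ} (hω : Periodic ω L) (hc : Periodic c L) (n : ℤ) (x : ℝ) :
    block φ₀ ω c (n + L) (x + L) = block φ₀ ω c n x := by
  simp only [block, hω n, hc n]
  push_cast
  ring_nf

variable {φ₀ ω}

theorem continuousOn_block (hcont : ContinuousOn φ₀ (Icc (-(1 / 2)) (1 / 2)))
    (hω : ∀ n, ω n = 1 ∨ ω n = -1) (n : ℤ) : ContinuousOn (block φ₀ ω c n) (cell n) :=
  continuousOn_const.mul <| hcont.comp (by fun_prop) fun x hx =>
    sign_mul_mem_Icc (hω n) ⟨by linarith [hx.1], by linarith [hx.2]⟩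

theorem block_right_eq (h0 : φ₀ (-(1 / 2)) ≠ 0) (h1 : φ₀ (1 / 2) ≠ 0)
    (hω : ∀ n, ω n = 1 ∨ ω n = -1) (n : ℤ) :
    block φ₀ ω c n (n + 1 / 2) =
      block φ₀ ω c n (n - 1 / 2) * (φ₀ (1 / 2) / φ₀ (-(1 / 2))) ^ ω n := by
  rw [sub_eq_add_neg, block_intCast_add, block_intCast_add, apply_sign_mul_half φ₀ h0 h1 (hω n),
    mul_assoc]

end Block

section Pasted

variable {φ₀ : ℝ → ℝ} {ω : ℤ → ℤ}

theorem sum_range_eq_zero_of_eqOn_block (hcont : ContinuousOn φ₀ (Icc (-(1 / 2)) (1 / 2)))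
    (hpos : ∀ x ∈ Icc (-(1 / 2 : ℝ)) (1 / 2), 0 < φ₀ x) (hhk : φ₀ (-(1 / 2)) ≠ φ₀ (1 / 2))
    (hω : ∀ n, ω n = 1 ∨ ω n = -1) {L : ℕ} {ψ : ℝ → ℝ} {c : ℤ → ℝ} (hc : ∀ n, 0 < c n)
    (hψ : Continuous ψ) (hψper : Periodic ψ L)
    (hcell : ∀ n : ℤ, EqOn ψ (block φ₀ ω c n) (Ioo ((n : ℝ) - 1 / 2) (n + 1 / 2))) :
    ∑ i ∈ range L, ω i = 0 := by
  have h0 : 0 < φ₀ (-(1 / 2)) := hpos _ (by norm_num)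
  have h1 : 0 < φ₀ (1 / 2) := hpos _ (by norm_num)
  set t := φ₀ (1 / 2) / φ₀ (-(1 / 2))
  have ht : 0 < t := div_pos h1 h0
  have ht1 : t ≠ 1 := fun h => hhk ((div_eq_one_iff_eq h0.ne').1 h).symm
  have hψcell (n : ℤ) : EqOn ψ (block φ₀ ω c n) (cell n) :=
    eqOn_Icc_of_eqOn_Ioo (by linarith) hψ.continuousOn (continuousOn_block c hcont hω n) (hcell n)
  set d : ℤ → ℝ := fun n => ψ (n - 1 / 2)
  have hd (n : ℤ) : d n = block φ₀ ω c n (n - 1 / 2) := hψcell n ⟨le_rfl, by linarith⟩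
  have hstep (n : ℤ) : d (n + 1) = d n * t ^ ω n := by
    rw [hd n, ← block_right_eq c h0.ne' h1.ne' hω n, ← hψcell n ⟨by linarith, le_rfl⟩]
    simp only [d]
    push_cast
    ring_nf
  have hdL : d L = d 0 := by
    simpa [d, neg_add_eq_sub] using hψper (-(1 / 2))
  have hd0 : d 0 ≠ 0 := by
    rw [hd, sub_eq_add_neg, block_intCast_add]
    exact (mul_pos (hc 0) (hpos _ (sign_mul_mem_Icc (hω 0) (by norm_num)))).ne'
  have hpow := eq_mul_zpow_sum_range ht.ne' hstep L
  rw [hdL, eq_comm, mul_eq_left₀ hd0] at hpow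
  exact (zpow_eq_one_iff_right₀ ht.le ht1).1 hpow

theorem exists_continuous_periodic_eqOn_block (hcont : ContinuousOn φ₀ (Icc (-(1 / 2)) (1 / 2)))
    (hpos : ∀ x ∈ Icc (-(1 / 2 : ℝ)) (1 / 2), 0 < φ₀ x) (hω : ∀ n, ω n = 1 ∨ ω n = -1) {L : ℕ}
    (hper : Periodic ω L) (hsum : ∑ i ∈ range L, ω i = 0) :
    ∃ c : ℤ → ℝ, (∀ n, 0 < c n) ∧ Continuous (paste (block φ₀ ω c)) ∧
      Periodic (paste (block φ₀ ω c)) L ∧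
      ∀ n, EqOn (paste (block φ₀ ω c)) (block φ₀ ω c n) (cell n) := by
  have h0 : 0 < φ₀ (-(1 / 2)) := hpos _ (by norm_num)
  have h1 : 0 < φ₀ (1 / 2) := hpos _ (by norm_num)
  set t := φ₀ (1 / 2) / φ₀ (-(1 / 2))
  have ht : 0 < t := div_pos h1 h0
  have hleftpos (n : ℤ) : 0 < φ₀ (ω n * (-(1 / 2))) :=
    hpos _ (sign_mul_mem_Icc (hω n) (by norm_num))
  set c : ℤ → ℝ := fun n => t ^ partialSum ω n / φ₀ (ω n * (-(1 / 2)))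
  have hleft (n : ℤ) : block φ₀ ω c n (n - 1 / 2) = t ^ partialSum ω n := by
    rw [sub_eq_add_neg, block_intCast_add]
    exact div_mul_cancel₀ _ (hleftpos n).ne'
  have hglue (n : ℤ) : block φ₀ ω c n (n + 1 / 2) = block φ₀ ω c (n + 1) (n + 1 / 2) := by
    rw [block_right_eq c h0.ne' h1.ne' hω, hleft,
      show (n : ℝ) + 1 / 2 = ((n + 1 : ℤ) : ℝ) - 1 / 2 by push_cast; ring, hleft,
      partialSum_add_one, zpow_add₀ ht.ne']
  have hcper : Periodic c L := fun n => by
    simp only [c]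
    rw [partialSum_add_natCast ω hper, hsum, add_zero, hper n]
  refine ⟨c, fun n => div_pos (zpow_pos ht _) (hleftpos n),
    continuous_paste (continuousOn_block c hcont hω) hglue, ?_, paste_eqOn_cell hglue⟩
  simpa using paste_periodic (L := L) (block_add_period φ₀ ω c hper hcper)

end Pasted

end PeriodicPasting

open PeriodicPasting

theorem stmt11_general (φ₀ : ℝ → ℝ)
    (hcont : ContinuousOn φ₀ (Set.Icc (-(1 / 2 : ℝ)) (1 / 2)))
    (hpos : ∀ x ∈ Set.Icc (-(1 / 2 : ℝ)) (1 / 2), 0 < φ₀ x)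
    (hhk : φ₀ (-(1 / 2)) ≠ φ₀ (1 / 2))
    (L : ℕ) (ω : ℤ → ℤ) (hω : ∀ n, ω n = 1 ∨ ω n = -1)
    (hper : ∀ n : ℤ, ω (n + L) = ω n) :
    (∃ (ψ : ℝ → ℝ) (c : ℤ → ℝ), (∀ n, 0 < c n) ∧ Continuous ψ ∧
      (∀ x : ℝ, ψ (x + L) = ψ x) ∧
      (∀ n : ℤ, ∀ x ∈ Set.Ioo ((n : ℝ) - 1 / 2) ((n : ℝ) + 1 / 2),
        ψ x = c n * φ₀ ((ω n : ℝ) * (x - n)))) ↔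
    (Even L ∧
      ((Finset.range L).filter fun i : ℕ => ω (i : ℤ) = 1).card =
      ((Finset.range L).filter fun i : ℕ => ω (i : ℤ) = -1).card) := by
  have hcount := even_and_card_filter_eq_iff_sum_eq_zero (range L) (f := fun i : ℕ => ω i)
    fun i _ => hω i
  rw [card_range] at hcount
  rw [hcount]
  constructor
  · rintro ⟨ψ, c, hc, hψ, hψper, hcell⟩
    exact sum_range_eq_zero_of_eqOn_block hcont hpos hhk hω hc hψ hψper hcell
  · intro hsum
    obtain ⟨c, hc, hψ, hψper, hcell⟩ :=
      exists_continuous_periodic_eqOn_block hcont hpos hω hper hsum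
    exact ⟨_, c, hc, hψ, hψper, fun n => (hcell n).mono Ioo_subset_Icc_self⟩

/-- One-dimensional pasting construction (Theorem 4): a periodic continuous function can
be built by pasting scaled copies of `φ₀` (with orientations `ω_n = ±1`) iff the period
`L` is even and within each period equally many `ω_n` equal `+1` and `−1`. -/
theorem stmt11 (φ₀ : ℝ → ℝ)
    (hcont : ContinuousOn φ₀ (Set.Icc (-(1 / 2 : ℝ)) (1 / 2)))
    (hpos : ∀ x ∈ Set.Icc (-(1 / 2 : ℝ)) (1 / 2), 0 < φ₀ x)
    (hhk : φ₀ (-(1 / 2)) ≠ φ₀ (1 / 2))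
    (L : ℕ) (hL : 0 < L) (ω : ℤ → ℤ) (hω : ∀ n, ω n = 1 ∨ ω n = -1)
    (hper : ∀ n : ℤ, ω (n + L) = ω n) :
    (∃ (ψ : ℝ → ℝ) (c : ℤ → ℝ), (∀ n, 0 < c n) ∧ Continuous ψ ∧
      (∀ x : ℝ, ψ (x + L) = ψ x) ∧
      (∀ n : ℤ, ∀ x ∈ Set.Ioo ((n : ℝ) - 1 / 2) ((n : ℝ) + 1 / 2),
        ψ x = c n * φ₀ ((ω n : ℝ) * (x - n)))) ↔
    (Even L ∧
      ((Finset.range L).filter fun i : ℕ => ω (i : ℤ) = 1).card =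
      ((Finset.range L).filter fun i : ℕ => ω (i : ℤ) = -1).card) :=
  stmt11_general φ₀ hcont hpos hhk L ω hω hper
end
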